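/- Let 1 → G₁ →^α G₂ →^β G₃ → 1 be an exact sequence of groups. Assume that G₁ is finitely generated and that the profinite completion Ĝ₁ of G₁ has trivial center. Then the induced sequence of profinite completions 1 → Ĝ₁ →^α̂ Ĝ₂ →^β̂ Ĝ₃ → 1 is also exact. -/

import Mathlib

set_option linter.unusedVariables false

namespace CSP

/-! ### The profinite completion of a discrete group -/

/-- The index set for the profinite completion: finite-index normal subgroups. -/
abbrev FinQuot (G : Type*) [Group G] : Type _ :=
  {N : Subgroup G // N.Normal ∧ N.FiniteIndex}

variable (G : Type*) [Group G]

instance (N : FinQuot G) : (N.1).Normal := N.2.1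

instance (N : FinQuot G) : TopologicalSpace (G ⧸ N.1) := ⊥

instance (N : FinQuot G) : DiscreteTopology (G ⧸ N.1) := ⟨rfl⟩

instance (N : FinQuot G) : IsTopologicalGroup (G ⧸ N.1) where
  continuous_mul := continuous_of_discreteTopology
  continuous_inv := continuous_of_discreteTopology

/-- The diagonal homomorphism from `G` into the product of all of its finite quotients. -/
def toFinQuots : G →* (∀ N : FinQuot G, G ⧸ N.1) :=
  Pi.monoidHom fun N => QuotientGroup.mk' N.1

/-- The profinite completion of `G` as a subgroup of the product of the finite
quotients of `G`: the closure of the image of the diagonal map. -/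
def profSubgroup : Subgroup (∀ N : FinQuot G, G ⧸ N.1) :=
  (toFinQuots G).range.topologicalClosure

/-- The profinite completion of a (discrete) group `G`, as a topological group.
For `G = F(X)` a free group on a finite set `X`, this is the free profinite group
`𝔉(X)` on `X`. -/
abbrev ProfComp : Type _ := ↥(profSubgroup G)

/-- The canonical homomorphism from `G` to its profinite completion.  For a free
group this is the embedding of `F(X)` into the free profinite group `𝔉(X)`. -/
def unit : G →* ProfComp G :=
  (toFinQuots G).codRestrict _ fun g =>
    Subgroup.le_topologicalClosure _ (MonoidHom.mem_range.2 ⟨g, rfl⟩)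

/-!
A continuous map out of `Ĝ` is determined by its values on the dense image of `G`. This gives
`β̂ ∘ α̂ = 1`, and `β̂` is onto because its image is compact and contains the image of `G₃`. An
element of `ker β̂` agrees modulo every finite-index normal subgroup of `G₂` with an element of
`α(G₁)`, so it lies in the closure of `im α̂`, which is compact.

For injectivity, let `N` be a finite-index normal subgroup of `G₁`. Since `G₁` is finitely
generated, `Hom(G₁, G₁/N)` is finite, and `G₂` acts on it by conjugation through `α`; the kernel
`M` of this action has finite index, and every `x ∈ G₁` with `α x ∈ M` is central modulo `N`.
Thus every element of `ker α̂` is central modulo every `N`, hence central in `Ĝ₁`, hence trivial.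
-/

theorem finite_monoidHom_of_fg {G Q : Type*} [Group G] [Group Q] [Group.FG G] [Finite Q] :
    Finite (G →* Q) := by
  obtain ⟨ι, _, φ, hφ⟩ := Group.fg_iff_exists_freeGroup_hom_surjective_finite.mp ‹_›
  have : Finite (FreeGroup ι →* Q) := .of_equiv _ FreeGroup.lift
  exact .of_injective (fun f => f.comp φ) fun _ _ h => (MonoidHom.cancel_right hφ).mp h

def MulAut.precompPerm (G Q : Type*) [Group G] [Group Q] : MulAut G →* Equiv.Perm (G →* Q) where
  toFun := MulEquiv.monoidHomCongrLeftEquiv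
  map_one' := rfl
  map_mul' _ _ := rfl

noncomputable def conjAutOfInjective {G₁ G₂ : Type*} [Group G₁] [Group G₂] {α : G₁ →* G₂}
    (hα : Function.Injective α) [α.range.Normal] : G₂ →* MulAut G₁ :=
  (MulAut.congr (MonoidHom.ofInjective hα).symm).toMonoidHom.comp MulAut.conjNormal

theorem conjAutOfInjective_apply_self {G₁ G₂ : Type*} [Group G₁] [Group G₂] {α : G₁ →* G₂}
    (hα : Function.Injective α) [α.range.Normal] (x : G₁) :
    conjAutOfInjective hα (α x) = MulAut.conj x := by
  ext y
  apply hα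
  have key : ∀ z : α.range, α ((MonoidHom.ofInjective hα).symm z) = z := fun z => by
    rw [← MonoidHom.ofInjective_apply hα, MulEquiv.apply_symm_apply]
  simp [conjAutOfInjective, MulAut.congr_apply, key, MonoidHom.ofInjective_apply]

theorem exists_normal_finiteIndex_mk_mem_center {G₁ G₂ : Type*} [Group G₁] [Group G₂]
    [Group.FG G₁] {α : G₁ →* G₂} (hα : Function.Injective α) [α.range.Normal]
    (N : Subgroup G₁) [N.Normal] [N.FiniteIndex] :
    ∃ M : Subgroup G₂, M.Normal ∧ M.FiniteIndex ∧
      ∀ x, α x ∈ M → (x : G₁ ⧸ N) ∈ Subgroup.center (G₁ ⧸ N) := by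
  have : Finite (G₁ →* G₁ ⧸ N) := finite_monoidHom_of_fg
  let ρ := (MulAut.precompPerm G₁ (G₁ ⧸ N)).comp (conjAutOfInjective hα)
  refine ⟨ρ.ker, inferInstance, inferInstance, fun x hx => ?_⟩
  have hfix :
      (QuotientGroup.mk' N).comp (MulAut.conj x).symm.toMonoidHom = QuotientGroup.mk' N := by
    rw [MonoidHom.mem_ker, MonoidHom.comp_apply, conjAutOfInjective_apply_self] at hx
    exact congr($hx (QuotientGroup.mk' N))
  rw [Subgroup.mem_center_iff]
  intro g
  induction g using QuotientGroup.induction_on with | _ g =>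
  simpa [mul_assoc] using DFunLike.congr_fun hfix (x * g)

instance (N : FinQuot G) : N.1.FiniteIndex := N.2.2

namespace FinQuot

variable {G} {H : Type*} [Group H]

def comap (f : G →* H) (N : FinQuot H) : FinQuot G :=
  ⟨N.1.comap f, N.2.1.comap f, by
    rw [← QuotientGroup.ker_mk' N.1, MonoidHom.comap_ker]
    infer_instance⟩

def map {f : G →* H} (hf : Function.Surjective f) (N : FinQuot G) : FinQuot H :=
  ⟨N.1.map f, N.2.1.map f hf, ⟨fun h =>
    N.1.index_ne_zero_of_finite (Nat.eq_zero_of_zero_dvd (h ▸ N.1.index_map_dvd hf))⟩⟩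

theorem exists_le_of_finset (I : Finset (FinQuot G)) : ∃ M : FinQuot G, ∀ N ∈ I, M.1 ≤ N.1 :=
  ⟨⟨⨅ N ∈ I, N.1, Subgroup.normal_iInf_normal fun N => Subgroup.normal_iInf_normal fun _ => N.2.1,
    Subgroup.finiteIndex_iInf' _ fun N _ => N.2.2⟩, fun _ hN => biInf_le _ hN⟩

end FinQuot

instance : CompactSpace (ProfComp G) :=
  isCompact_iff_compactSpace.mp (Subgroup.isClosed_topologicalClosure _).isCompact

variable {G}

@[simp]
theorem unit_apply_coe (g : G) (N : FinQuot G) : (unit G g).1 N = (g : G ⧸ N.1) := rfl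

theorem continuous_apply_coe (N : FinQuot G) : Continuous fun x : ProfComp G => x.1 N :=
  (continuous_apply N).comp continuous_subtype_val

variable (G) in
theorem denseRange_unit : DenseRange (unit G) := by
  rw [DenseRange, dense_iff_closure_eq, Set.eq_univ_iff_forall]
  intro x
  rw [closure_subtype, ← Set.range_comp]
  exact x.2

theorem hat_apply_coe {H : Type*} [Group H] {f : G →* H} {fhat : ProfComp G →* ProfComp H}
    (hcont : Continuous fhat) (hcompat : ∀ g, fhat (unit G g) = unit H (f g))
    {N : FinQuot H} {D : FinQuot G} (hD : D.1 ≤ N.1.comap f) (x : ProfComp G) :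
    (fhat x).1 N = QuotientGroup.map D.1 N.1 f hD (x.1 D) := by
  refine congrFun ((denseRange_unit G).equalizer ((continuous_apply_coe N).comp hcont)
    (continuous_of_discreteTopology.comp (continuous_apply_coe D)) ?_) x
  funext g
  simp [hcompat]

theorem apply_coe_eq_of_le {M N : FinQuot G} (hMN : M.1 ≤ N.1) {x y : ProfComp G}
    (hxy : x.1 M = y.1 M) : x.1 N = y.1 N := by
  have h := hat_apply_coe (f := MonoidHom.id G) (fhat := MonoidHom.id _) continuous_id
    (fun _ => rfl) hMN
  simp only [MonoidHom.id_apply] at h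
  rw [h, h, hxy]

theorem mem_closure_of_forall_apply_coe {S : Set (ProfComp G)} {y : ProfComp G}
    (h : ∀ N, ∃ z ∈ S, z.1 N = y.1 N) : y ∈ closure S := by
  rw [mem_closure_iff_nhds]
  intro U hU
  rw [nhds_subtype, Filter.mem_comap, nhds_pi] at hU
  obtain ⟨V, hV, hVU⟩ := hU
  obtain ⟨I, t, ht, hIt⟩ := Filter.mem_pi'.mp hV
  obtain ⟨M, hM⟩ := FinQuot.exists_le_of_finset I
  obtain ⟨z, hzS, hz⟩ := h M
  refine ⟨z, hVU (hIt fun N hN => ?_), hzS⟩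
  rw [apply_coe_eq_of_le (hM N hN) hz]
  exact mem_of_mem_nhds (ht N)

theorem mem_center_of_forall_apply_coe_mem_center {k : ProfComp G}
    (h : ∀ N, k.1 N ∈ Subgroup.center (G ⧸ N.1)) : k ∈ Subgroup.center (ProfComp G) := by
  rw [Subgroup.mem_center_iff]
  intro y
  ext N
  exact Subgroup.mem_center_iff.mp (h N) (y.1 N)

section Hat

variable {G₁ G₂ G₃ : Type*} [Group G₁] [Group G₂] [Group G₃] {α : G₁ →* G₂} {β : G₂ →* G₃}
  {αhat : ProfComp G₁ →* ProfComp G₂} {βhat : ProfComp G₂ →* ProfComp G₃}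

theorem hat_surjective (hβ : Function.Surjective β) (hβcont : Continuous βhat)
    (hβcompat : ∀ g, βhat (unit G₂ g) = unit G₃ (β g)) : Function.Surjective βhat := by
  have hsub : Set.range (unit G₃) ⊆ Set.range βhat := by
    rintro _ ⟨g, rfl⟩
    obtain ⟨g, rfl⟩ := hβ g
    exact ⟨unit G₂ g, hβcompat g⟩
  rw [← Set.range_eq_univ, ← (isCompact_range hβcont).isClosed.closure_eq]
  exact ((denseRange_unit G₃).mono hsub).closure_eq

theorem range_hat_le_ker_hat (h : α.range ≤ β.ker) (hαcont : Continuous αhat)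
    (hβcont : Continuous βhat) (hαcompat : ∀ g, αhat (unit G₁ g) = unit G₂ (α g))
    (hβcompat : ∀ g, βhat (unit G₂ g) = unit G₃ (β g)) : αhat.range ≤ βhat.ker := by
  rintro _ ⟨x, rfl⟩
  refine congrFun ((denseRange_unit G₁).equalizer (hβcont.comp hαcont) continuous_const ?_) x
  funext g
  simp [hαcompat, hβcompat, MonoidHom.mem_ker.mp (h ⟨g, rfl⟩)]

theorem ker_hat_le_range_hat (hβ : Function.Surjective β) (h : β.ker ≤ α.range)
    (hαcont : Continuous αhat) (hβcont : Continuous βhat)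
    (hαcompat : ∀ g, αhat (unit G₁ g) = unit G₂ (α g))
    (hβcompat : ∀ g, βhat (unit G₂ g) = unit G₃ (β g)) : βhat.ker ≤ αhat.range := by
  intro y hy
  rw [← SetLike.mem_coe, MonoidHom.coe_range, ← (isCompact_range hαcont).isClosed.closure_eq]
  refine mem_closure_of_forall_apply_coe fun N => ?_
  obtain ⟨g, hg⟩ := QuotientGroup.mk_surjective (y.1 N)
  have hβg : β g ∈ (FinQuot.map hβ N).1 := by
    have := hat_apply_coe hβcont hβcompat (N := FinQuot.map hβ N) (D := N)
      (fun n hn => Subgroup.mem_map_of_mem β hn) y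
    rw [hy, ← hg] at this
    exact (QuotientGroup.eq_one_iff _).mp this.symm
  obtain ⟨n, hn, hβn⟩ := hβg
  obtain ⟨x, hx⟩ := h (show g * n⁻¹ ∈ β.ker by simp [hβn])
  refine ⟨αhat (unit G₁ x), ⟨_, rfl⟩, ?_⟩
  rw [hαcompat, unit_apply_coe, hx, ← hg, QuotientGroup.mk_mul, QuotientGroup.mk_inv,
    (QuotientGroup.eq_one_iff n).mpr hn, inv_one, mul_one]

theorem hat_injective [Group.FG G₁] (hα : Function.Injective α) [α.range.Normal]
    (hcenter : Subgroup.center (ProfComp G₁) = ⊥) (hαcont : Continuous αhat)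
    (hαcompat : ∀ g, αhat (unit G₁ g) = unit G₂ (α g)) : Function.Injective αhat := by
  classical
  rw [injective_iff_map_eq_one]
  intro k hk
  rw [← Subgroup.mem_bot, ← hcenter]
  refine mem_center_of_forall_apply_coe_mem_center fun N => ?_
  obtain ⟨M, hMn, hMf, hM⟩ := exists_normal_finiteIndex_mk_mem_center hα N.1
  let M' : FinQuot G₂ := ⟨M, hMn, hMf⟩
  obtain ⟨L, hL⟩ := FinQuot.exists_le_of_finset {N, FinQuot.comap α M'}
  obtain ⟨x, hx⟩ := QuotientGroup.mk_surjective (k.1 L)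
  have hxk : ∀ {K : FinQuot G₁}, L.1 ≤ K.1 → k.1 K = (x : G₁ ⧸ K.1) := fun hLK =>
    apply_coe_eq_of_le (y := unit G₁ x) hLK hx.symm
  have hαx : α x ∈ M := by
    have := hat_apply_coe hαcont hαcompat (N := M') (D := FinQuot.comap α M') le_rfl k
    rw [hk, hxk (hL _ (by simp))] at this
    exact (QuotientGroup.eq_one_iff _).mp this.symm
  rw [hxk (hL _ (by simp))]
  exact hM x hαx

end Hat

theorem profinite_completion_exact
    (G₁ : Type*) (G₂ : Type*) (G₃ : Type*) [Group G₁] [Group G₂] [Group G₃]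
    (α : G₁ →* G₂) (β : G₂ →* G₃)
    (hαinj : Function.Injective α) (hβsurj : Function.Surjective β)
    (hexact : α.range = β.ker)
    (hfg : Group.FG G₁)
    (hcenter : Subgroup.center (ProfComp G₁) = ⊥)
    (αhat : ProfComp G₁ →* ProfComp G₂) (βhat : ProfComp G₂ →* ProfComp G₃)
    (hαcont : Continuous αhat) (hβcont : Continuous βhat)
    (hαcompat : ∀ g : G₁, αhat (unit G₁ g) = unit G₂ (α g))
    (hβcompat : ∀ g : G₂, βhat (unit G₂ g) = unit G₃ (β g)) :
    Function.Injective αhat ∧ αhat.range = βhat.ker ∧ Function.Surjective βhat := by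
  have := hfg
  have : α.range.Normal := hexact ▸ β.normal_ker
  refine ⟨hat_injective hαinj hcenter hαcont hαcompat, le_antisymm ?_ ?_,
    hat_surjective hβsurj hβcont hβcompat⟩
  · exact range_hat_le_ker_hat hexact.le hαcont hβcont hαcompat hβcompat
  · exact ker_hat_le_range_hat hβsurj hexact.ge hαcont hβcont hαcompat hβcompat

end CSP
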